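/- arXiv:1208.3100 — 7 statements merged into one kernel-verified Lean document; each statement's English description precedes it below -/
import Mathlib

section
/- Let A be a commutative ring of characteristic p > 0 and f ∈ A a non-zerodivisor. Then the set of twisted linear endomorphisms σ of A with σ((f)) ⊆ (f) equals f^{p-1} ∗ End_φ(A), i.e. every such σ is of the form b ↦ τ(f^{p-1} b) for some twisted linear endomorphism τ, and conversely every map of this form preserves the ideal (f). -/
/-- For a non-zerodivisor `f` in a ring `A` of prime characteristic `p`,
a twisted linear endomorphism `σ` of `A` preserves the ideal `(f)` if and only if
it has the form `f^(p-1) ∗ τ : b ↦ τ (f^(p-1) * b)` for some twisted linear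
endomorphism `τ`.  That is, `End_φ(A, (f)) = f^(p-1) ∗ End_φ(A)`. -/
theorem stmt_3 {A : Type*} [CommRing A] (p : ℕ) (hp : p.Prime) [CharP A p]
    (f : A) (hf : f ∈ nonZeroDivisors A)
    (σ : A → A)
    (hadd : ∀ a b : A, σ (a + b) = σ a + σ b)
    (htw : ∀ a b : A, σ (a ^ p * b) = a * σ b) :
    (∀ a ∈ Ideal.span {f}, σ a ∈ Ideal.span {f}) ↔
      ∃ τ : A → A,
        (∀ a b : A, τ (a + b) = τ a + τ b) ∧
        (∀ a b : A, τ (a ^ p * b) = a * τ b) ∧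
        (∀ b : A, σ b = τ (f ^ (p - 1) * b)) := by
  have hp1 : p - 1 + 1 = p := Nat.succ_pred_eq_of_pos hp.pos
  have hfp : ∀ b : A, f * (f ^ (p - 1) * b) = f ^ p * b := by
    intro b
    rw [← mul_assoc, ← pow_succ', hp1]
  have hcancel : ∀ x y : A, f * x = f * y → x = y := fun x y h =>
    (mul_cancel_left_mem_nonZeroDivisors hf).mp h
  constructor
  · intro hσ
    have hex : ∀ b : A, ∃ c : A, σ (f * b) = f * c := by
      intro b
      have : σ (f * b) ∈ Ideal.span {f} := by
        refine hσ _ ?_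
        exact Ideal.mem_span_singleton.mpr ⟨b, rfl⟩
      obtain ⟨c, hc⟩ := Ideal.mem_span_singleton.mp this
      exact ⟨c, hc⟩
    choose τ hτ using hex
    refine ⟨τ, ?_, ?_, ?_⟩
    · intro a b
      apply hcancel
      rw [mul_add, ← hτ, ← hτ, ← hτ, mul_add, hadd]
    · intro a b
      apply hcancel
      calc f * τ (a ^ p * b) = σ (f * (a ^ p * b)) := (hτ _).symm
        _ = σ (a ^ p * (f * b)) := by rw [mul_left_comm]
        _ = a * σ (f * b) := htw _ _
        _ = a * (f * τ b) := by rw [hτ]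
        _ = f * (a * τ b) := by ring
    · intro b
      apply hcancel
      rw [← hτ, hfp, htw]
  · rintro ⟨τ, hτadd, hτtw, hστ⟩ a ha
    obtain ⟨c, rfl⟩ := Ideal.mem_span_singleton.mp ha
    rw [hστ, mul_comm f c, ← mul_assoc, mul_comm (f ^ (p-1)) c, mul_assoc,
      ← pow_succ f (p-1), hp1, mul_comm c, hτtw]
    exact Ideal.mem_span_singleton.mpr ⟨τ c, rfl⟩
end

section
/- Let 𝔽 be a perfect field of characteristic p > 2. In A = 𝔽[x,y], the twisted endomorphism f ↦ σ₀((y² - x³ - x²)^{p-1} f), where σ₀ is the standard generator of End_φ(𝔽[x,y]), is a Frobenius splitting of 𝔽[x,y], compatible with the ideal (y² - x³ - x²). -/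
open MvPolynomial Pointwise

lemma aux_choose {𝔽 : Type*} [Field 𝔽] (p : ℕ) (hp : p.Prime) [CharP 𝔽 p] :
    ∀ k, k < p → (((p-1).choose k : ℕ) : 𝔽) = (-1)^k := by
  intro k
  induction k with
  | zero => intro _; simp
  | succ k ih =>
    intro hk
    have hk' : k < p := Nat.lt_of_succ_lt hk
    have h1 : p - 1 + 1 = p := Nat.succ_pred_eq_of_pos hp.pos
    have h2 : (p - 1).choose k + (p - 1).choose (k+1) = p.choose (k+1) := by
      rw [← h1, Nat.choose_succ_succ']; simp
    have h3 : ((p.choose (k+1) : ℕ) : 𝔽) = 0 := by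
      have := Nat.Prime.dvd_choose_self hp (Nat.succ_ne_zero k) hk
      exact (CharP.cast_eq_zero_iff 𝔽 p _).mpr this
    have h4 : (((p-1).choose k : ℕ) : 𝔽) + (((p-1).choose (k+1) : ℕ) : 𝔽) = 0 := by
      rw [← Nat.cast_add, h2, h3]
    rw [ih hk'] at h4
    have : (((p-1).choose (k+1) : ℕ) : 𝔽) = -(-1)^k := by linear_combination h4
    rw [this, pow_succ]
    ring

lemma aux_supp {𝔽 : Type*} [CommSemiring 𝔽] (f : MvPolynomial (Fin 2) 𝔽) (c₀ c₁ B : ℕ)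
    (hf : ∀ a ∈ f.support, c₀ * a 0 + c₁ * a 1 ≤ B) :
    ∀ n : ℕ, ∀ m ∈ (f ^ n).support, c₀ * m 0 + c₁ * m 1 ≤ n * B := by
  intro n
  induction n with
  | zero =>
    intro m hm
    simp only [pow_zero, mem_support_iff, coeff_one] at hm
    have : (0 : Fin 2 →₀ ℕ) = m := by
      by_contra h; rw [if_neg h] at hm; exact hm rfl
    subst this; simp
  | succ n ih =>
    intro m hm
    rw [pow_succ, mem_support_iff] at hm
    have hmem : m ∈ (f ^ n).support + f.support := by
      apply MvPolynomial.support_mul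
      rwa [mem_support_iff]
    rw [Finset.mem_add] at hmem
    obtain ⟨a, ha, b, hb, hab⟩ := hmem
    have h1 := ih a ha
    have h2 := hf b hb
    subst hab
    simp only [Finsupp.add_apply]
    ring_nf
    omega

lemma aux_wsupp {𝔽 : Type*} [Field 𝔽] :
    ∀ a ∈ (-(X 0 ^ 2 * (X 0 + 1)) : MvPolynomial (Fin 2) 𝔽).support,
      0 * a 0 + 1 * a 1 ≤ 0 := by
  intro a ha
  rw [mem_support_iff] at ha
  by_contra hc
  apply ha
  have h1 : a 1 ≠ 0 := by omega
  have e : (-(X 0 ^ 2 * (X 0 + 1)) : MvPolynomial (Fin 2) 𝔽)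
      = -(X 0 ^ 3) + -(X 0 ^ 2) := by ring
  have hne3 : ¬(Finsupp.single (0 : Fin 2) 3 = a) := by
    intro h; apply h1; rw [← h]; simp
  have hne2 : ¬(Finsupp.single (0 : Fin 2) 2 = a) := by
    intro h; apply h1; rw [← h]; simp
  rw [e, coeff_add, coeff_neg, coeff_neg, coeff_X_pow, coeff_X_pow,
    if_neg hne3, if_neg hne2]
  simp

lemma coeff_key {𝔽 : Type*} [Field 𝔽] (p : ℕ) (hp : p.Prime) (hp2 : 2 < p) [CharP 𝔽 p] :
    coeff (Finsupp.single 0 (p-1) + Finsupp.single 1 (p-1))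
      ((X 1 ^ 2 - X 0 ^ 3 - X 0 ^ 2 : MvPolynomial (Fin 2) 𝔽) ^ (p-1)) = 1 := by
  have hodd : Odd p := hp.odd_of_ne_two (by omega)
  set q : ℕ := (p - 1) / 2 with hq
  have hq2 : 2 * q = p - 1 := by
    obtain ⟨t, ht⟩ := hodd; omega
  have hqp : q < p := by omega
  set m' : Fin 2 →₀ ℕ := Finsupp.single 0 (p-1) + Finsupp.single 1 (p-1) with hm'
  have hm'0 : m' 0 = p - 1 := by simp [hm']
  have hm'1 : m' 1 = p - 1 := by simp [hm']
  set w : MvPolynomial (Fin 2) 𝔽 := -(X 0 ^ 2 * (X 0 + 1)) with hw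
  have hgw : (X 1 ^ 2 - X 0 ^ 3 - X 0 ^ 2 : MvPolynomial (Fin 2) 𝔽) = X 1 ^ 2 + w := by
    rw [hw]; ring
  have hwp : ∀ j : ℕ, ∀ m : Fin 2 →₀ ℕ, m 1 ≠ 0 → coeff m (w ^ j) = 0 := by
    intro j m hm
    by_contra hc
    have := aux_supp w 0 1 0 aux_wsupp j m (mem_support_iff.mpr hc)
    omega
  -- the generic term
  have hterm : ∀ k, coeff m' ((X 1 ^ 2) ^ k * w ^ (p - 1 - k) * ((p-1).choose k : MvPolynomial (Fin 2) 𝔽))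
      = ((p-1).choose k : 𝔽) * (if 2 * k ≤ p - 1 then coeff (m' - Finsupp.single 1 (2*k)) (w ^ (p-1-k)) else 0) := by
    intro k
    rw [← C_eq_coe_nat, mul_comm, coeff_C_mul, ← pow_mul, X_pow_eq_monomial,
      coeff_monomial_mul']
    simp only [Finsupp.single_le_iff, hm'1, one_mul]
  rw [hgw, add_pow, Nat.sub_add_cancel hp.one_le, coeff_sum]
  rw [Finset.sum_eq_single_of_mem q (Finset.mem_range.mpr hqp)]
  · rw [hterm, if_pos (by omega)]
    have hms : m' - Finsupp.single 1 (2*q) = Finsupp.single 0 (p-1) := by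
      ext i
      rw [Finsupp.tsub_apply]
      fin_cases i <;> simp [hm'] <;> omega
    have hpq : p - 1 - q = q := by omega
    rw [hms, hpq]
    have hwq : w ^ q = C ((-1 : 𝔽) ^ q) * ((monomial (Finsupp.single 0 (p-1)) (1:𝔽)) * (X 0 + 1) ^ q) := by
      rw [hw, neg_pow, mul_pow, ← pow_mul, hq2, X_pow_eq_monomial]
      congr 1
      simp [map_pow]
    rw [hwq, coeff_C_mul, coeff_monomial_mul', if_pos le_rfl, tsub_self, one_mul]
    have hcc : coeff 0 ((X 0 + 1 : MvPolynomial (Fin 2) 𝔽) ^ q) = 1 := by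
      rw [← constantCoeff_eq]
      simp
    rw [hcc, mul_one, aux_choose p hp q hqp]
    rw [← mul_pow]
    simp
  · intro k hk hkq
    rw [hterm]
    rcases le_or_gt (2*k) (p-1) with h | h
    · rw [if_pos h]
      have h5 : (m' - Finsupp.single (1 : Fin 2) (2*k)) 1 = p - 1 - 2*k := by
        rw [Finsupp.tsub_apply, hm'1]; simp
      rw [hwp _ _ (by rw [h5]; omega)]
      ring
    · rw [if_neg (by omega)]; ring

lemma aux_dvd (p n : ℕ) (hp : 0 < p) (h : p ∣ n + 1) (hn : n + 1 < 2 * p) : n + 1 = p := by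
  rcases h with ⟨t, ht⟩
  have h0 : t ≠ 0 := by rintro rfl; omega
  have h2 : t < 2 := by
    by_contra hc
    have h3 : 2 * p ≤ p * t := by
      calc 2 * p = p * 2 := by ring
        _ ≤ p * t := Nat.mul_le_mul_left p (by omega)
    omega
  have : t = 1 := by omega
  subst this
  omega

/-- The node is split (for `p > 2`): in `A = 𝔽[x,y]`, the map
`f ↦ σ₀ ((y² - x³ - x²)^(p-1) * f)` is a Frobenius splitting of `A` compatible with the
ideal `(y² - x³ - x²)`. -/
theorem stmt_8 {𝔽 : Type*} [Field 𝔽] (p : ℕ) (hp : p.Prime) (hp2 : 2 < p)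
    [CharP 𝔽 p] [ExpChar 𝔽 p] [PerfectRing 𝔽 p]
    (σ₀ : MvPolynomial (Fin 2) 𝔽 → MvPolynomial (Fin 2) 𝔽)
    (h0add : ∀ a b, σ₀ (a + b) = σ₀ a + σ₀ b)
    (h0tw : ∀ a b, σ₀ (a ^ p * b) = a * σ₀ b)
    (h0val : ∀ m : Fin 2 →₀ ℕ,
      σ₀ (monomial m 1) =
        if p ∣ m 0 + 1 ∧ p ∣ m 1 + 1 then
          (X 0 : MvPolynomial (Fin 2) 𝔽) ^ ((m 0 + 1) / p - 1) * X 1 ^ ((m 1 + 1) / p - 1)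
        else 0) :
    let g : MvPolynomial (Fin 2) 𝔽 := X 1 ^ 2 - X 0 ^ 3 - X 0 ^ 2
    let σ : MvPolynomial (Fin 2) 𝔽 → MvPolynomial (Fin 2) 𝔽 :=
      fun f => σ₀ (g ^ (p - 1) * f)
    (∀ a b, σ (a + b) = σ a + σ b) ∧
    (∀ a b, σ (a ^ p * b) = a * σ b) ∧
    σ 1 = 1 ∧
    (∀ f ∈ Ideal.span {g}, σ f ∈ Ideal.span {g}) := by
  intro g σ
  have hgdef : g = X 1 ^ 2 - X 0 ^ 3 - X 0 ^ 2 := rfl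
  refine ⟨?_, ?_, ?_, ?_⟩
  · -- additive
    intro a b
    show σ₀ (g ^ (p-1) * (a + b)) = σ₀ (g ^ (p-1) * a) + σ₀ (g ^ (p-1) * b)
    rw [mul_add, h0add]
  · -- twisted
    intro a b
    show σ₀ (g ^ (p-1) * (a ^ p * b)) = a * σ₀ (g ^ (p-1) * b)
    rw [show g ^ (p-1) * (a ^ p * b) = a ^ p * (g ^ (p-1) * b) by ring, h0tw]
  · -- σ 1 = 1
    show σ₀ (g ^ (p-1) * 1) = 1
    rw [mul_one]
    -- weight bound on monomials of g^(p-1)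
    have hgsupp : ∀ a ∈ g.support, 2 * a 0 + 3 * a 1 ≤ 6 := by
      intro a ha
      rw [mem_support_iff] at ha
      by_contra hc
      apply ha
      have e : g = X 1 ^ 2 + -(X 0 ^ 3) + -(X 0 ^ 2) := by rw [hgdef]; ring
      have hne1 : ¬(Finsupp.single (1 : Fin 2) 2 = a) := by
        intro h; apply hc; rw [← h]; simp
      have hne2 : ¬(Finsupp.single (0 : Fin 2) 3 = a) := by
        intro h; apply hc; rw [← h]; simp
      have hne3 : ¬(Finsupp.single (0 : Fin 2) 2 = a) := by
        intro h; apply hc; rw [← h]; simp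
      rw [e, coeff_add, coeff_add, coeff_neg, coeff_neg, coeff_X_pow, coeff_X_pow,
        coeff_X_pow, if_neg hne1, if_neg hne2, if_neg hne3]
      simp
    have hGsupp := aux_supp g 2 3 6 hgsupp (p - 1)
    set m' : Fin 2 →₀ ℕ := Finsupp.single 0 (p-1) + Finsupp.single 1 (p-1) with hm'
    have hm'0 : m' 0 = p - 1 := by simp [hm']
    have hm'1 : m' 1 = p - 1 := by simp [hm']
    have hkey : coeff m' (g ^ (p-1)) = 1 := by rw [hgdef]; exact coeff_key p hp hp2
    -- uniqueness of the qualifying monomial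
    have huniq : ∀ m ∈ (g ^ (p-1)).support, (p ∣ m 0 + 1 ∧ p ∣ m 1 + 1) → m = m' := by
      intro m hm hdvd
      obtain ⟨hd0, hd1⟩ := hdvd
      have hw := hGsupp m hm
      have hm1 : m 1 = p - 1 := by
        have := aux_dvd p (m 1) hp.pos hd1 (by omega)
        omega
      have hm0 : m 0 = p - 1 := by
        have := aux_dvd p (m 0) hp.pos hd0 (by omega)
        omega
      ext i
      fin_cases i
      · show m 0 = m' 0; rw [hm0, hm'0]
      · show m 1 = m' 1; rw [hm1, hm'1]
    -- decompose into monomials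
    let Φ : MvPolynomial (Fin 2) 𝔽 →+ MvPolynomial (Fin 2) 𝔽 := AddMonoidHom.mk' σ₀ h0add
    have hΦ : ∀ f, σ₀ f = Φ f := fun _ => rfl
    have hmono : ∀ (m : Fin 2 →₀ ℕ) (c : 𝔽),
        σ₀ (monomial m c) = C ((frobeniusEquiv 𝔽 p).symm c) * σ₀ (monomial m 1) := by
      intro m c
      have e : (monomial m c : MvPolynomial (Fin 2) 𝔽)
          = (C ((frobeniusEquiv 𝔽 p).symm c)) ^ p * monomial m 1 := by
        rw [← map_pow, frobeniusEquiv_symm_pow_p, C_mul_monomial, mul_one]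
      rw [e, h0tw]
    rw [← support_sum_monomial_coeff (g ^ (p-1)), hΦ, map_sum]
    have hm'mem : m' ∈ (g ^ (p-1)).support := mem_support_iff.mpr (by rw [hkey]; exact one_ne_zero)
    rw [Finset.sum_eq_single_of_mem m' hm'mem]
    · rw [← hΦ, hmono, hkey, map_one, map_one, one_mul, h0val]
      have hd : p ∣ m' 0 + 1 ∧ p ∣ m' 1 + 1 := by
        constructor <;> [rw [hm'0]; rw [hm'1]] <;>
          · have : p - 1 + 1 = p := Nat.succ_pred_eq_of_pos hp.pos
            rw [this]
      rw [if_pos hd, hm'0, hm'1]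
      have : p - 1 + 1 = p := Nat.succ_pred_eq_of_pos hp.pos
      rw [this, Nat.div_self hp.pos]
      simp
    · intro m hm hmne
      rw [← hΦ, hmono, h0val]
      by_cases hd : p ∣ m 0 + 1 ∧ p ∣ m 1 + 1
      · exact absurd (huniq m hm hd) hmne
      · rw [if_neg hd, mul_zero]
  · -- compatibility
    intro f hf
    rw [Ideal.mem_span_singleton] at hf
    obtain ⟨c, rfl⟩ := hf
    show σ₀ (g ^ (p-1) * (g * c)) ∈ Ideal.span {g}
    have e : g ^ (p-1) * (g * c) = g ^ p * c := by
      calc g ^ (p-1) * (g * c) = (g ^ (p-1) * g) * c := by ring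
        _ = g ^ p * c := by rw [← pow_succ, Nat.sub_add_cancel hp.one_le]
    rw [e, h0tw]
    exact Ideal.mem_span_singleton.mpr (Dvd.intro _ rfl)
end

section
/- Let 𝔽 be a perfect field of characteristic p > 0 and A = 𝔽[x₁,…,xₙ]. Let σ₀ be the twisted endomorphism with σ₀(x₁^{p-1}⋯xₙ^{p-1}) = 1 and σ₀ vanishing on all other monomials x₁^{m₁}⋯xₙ^{mₙ} for which some mᵢ + 1 is not divisible by p. Then for f ∈ A, the map f ∗ σ₀ : g ↦ σ₀(fg) is a Frobenius splitting of A if and only if the coefficient of x₁^{p-1}⋯xₙ^{p-1} in f is 1 and every other monomial x₁^{m₁}⋯xₙ^{mₙ} occurring in f with nonzero coefficient has some mᵢ + 1 not divisible by p. -/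
open MvPolynomial

/-!
Over a perfect ring every coefficient is a `p`-th power, so the twisting rule gives
`σ₀ (c • X ^ m) = c ^ (1/p) • σ₀ (X ^ m)`. Hence `σ₀ f` is the sum of `c_m ^ (1/p) • X ^ k` over
the exponents `m = p • k + (p - 1)` of `f`, and distinct such `m` give distinct `k`. So
`σ₀ f = 1` says precisely that `X ^ (p - 1)` is the only such monomial of `f` and its
coefficient is `1`. The additivity and twisting of `g ↦ σ₀ (f * g)` are inherited from `σ₀`.
-/

namespace MvPolynomial

variable {ι R : Type*}

def IsNegOneMod (p : ℕ) (m : ι →₀ ℕ) : Prop := ∀ i, p ∣ m i + 1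

/-- For `m = p • k + (p - 1)` this is `k`. -/
noncomputable def traceExponent (p : ℕ) (m : ι →₀ ℕ) : ι →₀ ℕ :=
  m.mapRange (fun k => (k + 1) / p - 1) (Nat.sub_eq_zero_of_le (Nat.div_le_self 1 p))

@[simp]
theorem traceExponent_apply (p : ℕ) (m : ι →₀ ℕ) (i : ι) :
    traceExponent p m i = (m i + 1) / p - 1 := rfl

theorem IsNegOneMod.succ_eq {p : ℕ} (hp : 0 < p) {m : ι →₀ ℕ} (hm : IsNegOneMod p m) (i : ι) :
    m i + 1 = p * (traceExponent p m i + 1) := by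
  obtain ⟨k, hk⟩ := hm i
  have hk0 : 0 < k := Nat.pos_of_ne_zero (by rintro rfl; simp at hk)
  rw [traceExponent_apply, hk, Nat.mul_div_cancel_left k hp, Nat.sub_add_cancel hk0]

theorem injOn_traceExponent {p : ℕ} (hp : 0 < p) :
    Set.InjOn (traceExponent (ι := ι) p) {m | IsNegOneMod p m} := by
  intro m hm m' hm' he
  ext i
  have h := hm.succ_eq hp i
  rw [he, ← hm'.succ_eq hp i] at h
  omega

theorem isNegOneMod_const [Finite ι] {p : ℕ} (hp : 0 < p) :
    IsNegOneMod p (Finsupp.equivFunOnFinite.symm fun _ : ι => p - 1) := fun _ => by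
  simp [Nat.sub_add_cancel hp]

theorem traceExponent_const [Finite ι] {p : ℕ} (hp : 0 < p) :
    traceExponent p (Finsupp.equivFunOnFinite.symm fun _ : ι => p - 1) = 0 := by
  ext
  simp [Nat.sub_add_cancel hp, Nat.div_self hp]

theorem monomial_eq_C_frobeniusEquiv_symm_pow_mul [CommSemiring R] (p : ℕ) [ExpChar R p]
    [PerfectRing R p] (m : ι →₀ ℕ) (c : R) :
    monomial m c = C ((frobeniusEquiv R p).symm c) ^ p * monomial m 1 := by
  rw [← map_pow, frobeniusEquiv_symm_pow_p, C_mul_monomial, mul_one]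

structure IsStandardTrace [CommRing R] (p : ℕ) (σ₀ : MvPolynomial ι R → MvPolynomial ι R) :
    Prop where
  map_add : ∀ a b, σ₀ (a + b) = σ₀ a + σ₀ b
  map_pow_mul : ∀ a b, σ₀ (a ^ p * b) = a * σ₀ b
  monomial_one_of_isNegOneMod :
    ∀ m, IsNegOneMod p m → σ₀ (monomial m 1) = monomial (traceExponent p m) 1
  monomial_one_of_not_isNegOneMod : ∀ m, ¬ IsNegOneMod p m → σ₀ (monomial m 1) = 0

namespace IsStandardTrace

variable [CommRing R] {p : ℕ} {σ₀ : MvPolynomial ι R → MvPolynomial ι R}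
  (hσ : IsStandardTrace p σ₀)
include hσ

theorem apply_eq_sum (f : MvPolynomial ι R) :
    σ₀ f = ∑ m ∈ f.support, σ₀ (monomial m (coeff m f)) := by
  conv_lhs => rw [f.as_sum]
  exact map_sum (AddMonoidHom.mk' σ₀ hσ.map_add) _ _

variable [ExpChar R p] [PerfectRing R p]

theorem monomial_of_isNegOneMod {m : ι →₀ ℕ} (hm : IsNegOneMod p m) (c : R) :
    σ₀ (monomial m c) = monomial (traceExponent p m) ((frobeniusEquiv R p).symm c) := by
  rw [monomial_eq_C_frobeniusEquiv_symm_pow_mul p, hσ.map_pow_mul,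
    hσ.monomial_one_of_isNegOneMod m hm, C_mul_monomial, mul_one]

theorem monomial_of_not_isNegOneMod {m : ι →₀ ℕ} (hm : ¬ IsNegOneMod p m) (c : R) :
    σ₀ (monomial m c) = 0 := by
  rw [monomial_eq_C_frobeniusEquiv_symm_pow_mul p, hσ.map_pow_mul,
    hσ.monomial_one_of_not_isNegOneMod m hm, mul_zero]

theorem apply_eq_zero {f : MvPolynomial ι R} (hf : ∀ m ∈ f.support, ¬ IsNegOneMod p m) :
    σ₀ f = 0 := by
  rw [hσ.apply_eq_sum]
  exact Finset.sum_eq_zero fun m hm => hσ.monomial_of_not_isNegOneMod (hf m hm) _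

theorem coeff_traceExponent_monomial_of_ne {m₀ m : ι →₀ ℕ} (hm₀ : IsNegOneMod p m₀)
    (hne : m ≠ m₀) (c : R) : coeff (traceExponent p m₀) (σ₀ (monomial m c)) = 0 := by
  classical
  by_cases hm : IsNegOneMod p m
  · rw [hσ.monomial_of_isNegOneMod hm, coeff_monomial,
      if_neg ((injOn_traceExponent (expChar_pos R p)).ne hm hm₀ hne)]
  · rw [hσ.monomial_of_not_isNegOneMod hm, coeff_zero]

theorem coeff_traceExponent {m₀ : ι →₀ ℕ} (hm₀ : IsNegOneMod p m₀) (f : MvPolynomial ι R) :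
    coeff (traceExponent p m₀) (σ₀ f) = (frobeniusEquiv R p).symm (coeff m₀ f) := by
  classical
  rw [hσ.apply_eq_sum, coeff_sum]
  by_cases hmem : m₀ ∈ f.support
  · rw [Finset.sum_eq_single_of_mem m₀ hmem fun m _ hne =>
        hσ.coeff_traceExponent_monomial_of_ne hm₀ hne _,
      hσ.monomial_of_isNegOneMod hm₀, coeff_monomial, if_pos rfl]
  · rw [notMem_support_iff.mp hmem, map_zero]
    exact Finset.sum_eq_zero fun m hm =>
      hσ.coeff_traceExponent_monomial_of_ne hm₀ (by rintro rfl; exact hmem hm) _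

theorem apply_eq_one_iff [Finite ι] (f : MvPolynomial ι R) :
    σ₀ f = 1 ↔ coeff (Finsupp.equivFunOnFinite.symm fun _ => p - 1) f = 1 ∧
      ∀ m ∈ f.support, m ≠ Finsupp.equivFunOnFinite.symm (fun _ => p - 1) →
        ¬ IsNegOneMod p m := by
  classical
  have hp := expChar_pos R p
  set c : ι →₀ ℕ := Finsupp.equivFunOnFinite.symm fun _ => p - 1
  have hc : IsNegOneMod p c := isNegOneMod_const hp
  have hc0 : traceExponent p c = 0 := traceExponent_const hp
  constructor
  · intro h1
    refine ⟨?_, fun m hm hne hneg => ?_⟩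
    · have h := hσ.coeff_traceExponent hc f
      rwa [h1, hc0, coeff_zero_one, eq_comm, RingEquiv.symm_apply_eq, map_one] at h
    · have h := hσ.coeff_traceExponent hneg f
      have hne' : (0 : ι →₀ ℕ) ≠ traceExponent p m :=
        hc0 ▸ fun h => hne ((injOn_traceExponent hp).eq_iff hneg hc |>.mp h.symm)
      rw [h1, coeff_one, if_neg hne', eq_comm, map_eq_zero_iff _ (RingEquiv.injective _)] at h
      exact mem_support_iff.mp hm h
  · rintro ⟨h1, h2⟩
    have hrest : ∀ m ∈ (f - monomial c 1).support, ¬ IsNegOneMod p m := by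
      intro m hm
      rw [mem_support_iff, coeff_sub, coeff_monomial] at hm
      by_cases hmc : c = m
      · subst hmc
        simp [h1] at hm
      · rw [if_neg hmc, sub_zero] at hm
        exact h2 m (mem_support_iff.mpr hm) (Ne.symm hmc)
    rw [← add_sub_cancel (monomial c 1) f, hσ.map_add, hσ.apply_eq_zero hrest, add_zero,
      hσ.monomial_of_isNegOneMod hc, hc0, map_one, ← one_def]

end IsStandardTrace

end MvPolynomial

/-- In `A = 𝔽[x₁,…,xₙ]`, with `σ₀` the standard twisted endomorphism, the map
`f ∗ σ₀ : g ↦ σ₀ (f * g)` is a Frobenius splitting of `A` if and only if the coefficient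
of `x₁^(p-1)⋯xₙ^(p-1)` in `f` is `1` and every other monomial `x₁^{m₁}⋯xₙ^{mₙ}` occurring
in `f` has some `mᵢ + 1` not divisible by `p`. -/
theorem stmt_9 {𝔽 : Type*} [Field 𝔽] (p : ℕ) (hp : p.Prime)
    [ExpChar 𝔽 p] [PerfectRing 𝔽 p] (n : ℕ)
    (σ₀ : MvPolynomial (Fin n) 𝔽 → MvPolynomial (Fin n) 𝔽)
    (h0add : ∀ a b, σ₀ (a + b) = σ₀ a + σ₀ b)
    (h0tw : ∀ a b, σ₀ (a ^ p * b) = a * σ₀ b)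
    (h0val : ∀ m : Fin n →₀ ℕ,
      σ₀ (monomial m 1) =
        if ∀ i, p ∣ m i + 1 then
          monomial (m.mapRange (fun k => (k + 1) / p - 1)
            (by simp [Nat.div_eq_of_lt hp.one_lt])) 1
        else 0)
    (f : MvPolynomial (Fin n) 𝔽) :
    let pm1 : Fin n →₀ ℕ := Finsupp.equivFunOnFinite.symm fun _ => p - 1
    ((∀ a b, (fun g => σ₀ (f * g)) (a + b) = σ₀ (f * a) + σ₀ (f * b)) ∧
     (∀ a b, σ₀ (f * (a ^ p * b)) = a * σ₀ (f * b)) ∧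
     σ₀ (f * 1) = 1)
    ↔
    (coeff pm1 f = 1 ∧
     ∀ m ∈ f.support, m ≠ pm1 → ∃ i, ¬ p ∣ m i + 1) := by
  intro pm1
  have hσ : IsStandardTrace p σ₀ :=
    ⟨h0add, h0tw, fun m hm => (h0val m).trans (if_pos hm),
      fun m hm => (h0val m).trans (if_neg hm)⟩
  have hmul_tw : ∀ a b, σ₀ (f * (a ^ p * b)) = a * σ₀ (f * b) := fun a b => by
    rw [mul_left_comm, h0tw]
  simpa [mul_add, h0add, hmul_tw, IsNegOneMod, pm1] using hσ.apply_eq_one_iff f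
end

section
/- Let A be a commutative ring of characteristic p > 0, S a multiplicative subset of A not containing 0, and σ a twisted linear endomorphism of A. Then there is a well-defined twisted linear endomorphism σ_S of S⁻¹A given by σ_S(a/b) = σ(a b^{p-1})/b for a ∈ A, b ∈ S; moreover if σ is a Frobenius splitting then so is σ_S. -/
/-- Localization of a twisted linear endomorphism: for a multiplicative set `S` with
`0 ∉ S` and a twisted linear endomorphism `σ` of `A`, there is a well-defined twisted
linear endomorphism `σ_S` of `S⁻¹A` with `σ_S (a/b) = σ (a * b^(p-1)) / b`; moreover if
`σ` is a Frobenius splitting then so is `σ_S`. -/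
theorem stmt_13 {A : Type*} [CommRing A] (p : ℕ) (hp : p.Prime) [CharP A p]
    (S : Submonoid A) (h0 : (0 : A) ∉ S)
    (σ : A → A)
    (hadd : ∀ a b : A, σ (a + b) = σ a + σ b)
    (htw : ∀ a b : A, σ (a ^ p * b) = a * σ b) :
    ∃ σS : Localization S → Localization S,
      (∀ x y, σS (x + y) = σS x + σS y) ∧
      (∀ x y, σS (x ^ p * y) = x * σS y) ∧
      (∀ (a : A) (b : S), σS (Localization.mk a b) =
          Localization.mk (σ (a * (b : A) ^ (p - 1))) b) ∧
      (σ 1 = 1 → σS 1 = 1) := by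
  obtain ⟨q, rfl⟩ : ∃ q, p = q + 1 := ⟨p - 1, (Nat.succ_pred_eq_of_pos hp.pos).symm⟩
  simp only [Nat.add_sub_cancel] at *
  set σS : Localization S → Localization S := fun x =>
    Localization.liftOn x (fun a b => Localization.mk (σ (a * (b : A) ^ q)) b)
      (by
        intro a c b d hr
        rw [Localization.r_iff_exists] at hr
        obtain ⟨u, hu⟩ := hr
        simp only at hu
        rw [Localization.mk_eq_mk_iff, Localization.r_iff_exists]
        refine ⟨u, ?_⟩
        have h1 : (u : A) * ((d : A) * σ (a * (b : A) ^ q)) =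
            σ (((u : A) * d) ^ (q + 1) * (a * (b : A) ^ q)) := by
          rw [htw]; ring
        have h2 : (u : A) * ((b : A) * σ (c * (d : A) ^ q)) =
            σ (((u : A) * b) ^ (q + 1) * (c * (d : A) ^ q)) := by
          rw [htw]; ring
        rw [h1, h2]
        congr 1
        linear_combination ((u : A) ^ q * (b : A) ^ q * (d : A) ^ q) * hu)
    with hσS
  have hmk : ∀ (a : A) (b : S), σS (Localization.mk a b) =
      Localization.mk (σ (a * (b : A) ^ q)) b := fun a b => rfl
  refine ⟨σS, ?_, ?_, hmk, ?_⟩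
  · intro x y
    induction x using Localization.induction_on with | H x =>
    induction y using Localization.induction_on with | H y =>
    obtain ⟨a, b⟩ := x; obtain ⟨c, d⟩ := y
    rw [Localization.add_mk, hmk, hmk, hmk, Localization.add_mk]
    congr 1
    simp only [Submonoid.coe_mul]
    have : ((b : A) * c + (d : A) * a) * ((b : A) * d) ^ q =
        (b : A) ^ (q + 1) * (c * (d : A) ^ q) + (d : A) ^ (q + 1) * (a * (b : A) ^ q) := by
      ring
    rw [this, hadd, htw, htw]
  · intro x y
    induction x using Localization.induction_on with | H x =>
    induction y using Localization.induction_on with | H y =>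
    obtain ⟨a, b⟩ := x; obtain ⟨c, d⟩ := y
    rw [Localization.mk_pow, Localization.mk_mul, hmk, hmk, Localization.mk_mul]
    simp only [Submonoid.coe_mul, SubmonoidClass.coe_pow]
    have : a ^ (q + 1) * c * ((b : A) ^ (q + 1) * (d : A)) ^ q =
        (a * (b : A) ^ q) ^ (q + 1) * (c * (d : A) ^ q) := by
      ring
    rw [this, htw]
    rw [Localization.mk_eq_mk_iff, Localization.r_iff_exists]
    refine ⟨1, ?_⟩
    push_cast
    ring
  · intro h1
    rw [show (1 : Localization S) = Localization.mk 1 1 from Localization.mk_one.symm, hmk]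
    simp [h1, Localization.mk_one]
end

section
/- Let R be a commutative ring of characteristic p > 0 and let Φ(X,Y) = ((X+Y)^p − X^p − Y^p)/p ∈ ℤ[X,Y] (well-defined since the binomial coefficients C(p,i) for 0 < i < p are divisible by p). Then in the module of Kähler differentials Ω¹_R, for all f, g ∈ R: (f+g)^{p-1} d(f+g) = f^{p-1} df + g^{p-1} dg + dΦ(f,g), and (fg)^{p-1} d(fg) = g^p · f^{p-1} df + f^p · g^{p-1} dg. -/
open MvPolynomial

lemma der_aeval_fin2 {R M : Type*} [CommRing R] [AddCommGroup M] [Module R M]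
    (D : Derivation ℤ R M) (x : Fin 2 → R) (q : MvPolynomial (Fin 2) ℤ) :
    D (aeval x q) = ∑ i, aeval x (pderiv i q) • D (x i) := by
  classical
  induction q using MvPolynomial.induction_on with
  | C a => simp
  | add q r hq hr => simp [hq, hr, add_smul, Finset.sum_add_distrib]
  | mul_X q i h =>
      fin_cases i <;>
      · simp only [map_mul, Derivation.leibniz, aeval_X, h, pderiv_mul, pderiv_X, map_add,
          Fin.sum_univ_two, Pi.single_apply, smul_add, Fin.isValue]
        simp only [Fin.isValue, if_true, if_false, Fin.zero_eta, Fin.mk_one, one_ne_zero,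
          zero_ne_one, map_one, map_zero, map_mul, map_smul, smul_eq_mul, mul_one, mul_zero,
          aeval_X]
        module

lemma pderiv_phi (p : ℕ) (hp : p.Prime) (Φ : MvPolynomial (Fin 2) ℤ)
    (hΦ : (p : MvPolynomial (Fin 2) ℤ) * Φ = (X 0 + X 1) ^ p - X 0 ^ p - X 1 ^ p)
    (i : Fin 2) :
    pderiv i Φ = (X 0 + X 1) ^ (p - 1) - X i ^ (p - 1) := by
  have hpne : (p : MvPolynomial (Fin 2) ℤ) ≠ 0 := by
    exact_mod_cast Nat.cast_ne_zero.mpr hp.ne_zero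
  apply mul_left_cancel₀ hpne
  have hmul : (p : MvPolynomial (Fin 2) ℤ) * pderiv i Φ
      = pderiv i ((X 0 + X 1) ^ p - X 0 ^ p - X 1 ^ p) := by
    rw [← hΦ, show ((p : MvPolynomial (Fin 2) ℤ)) = C (p : ℤ) from (map_natCast C p).symm]
    simp
  have hXadd : pderiv i (X 0 + X 1 : MvPolynomial (Fin 2) ℤ) = 1 := by
    fin_cases i <;> simp
  have hpow : ∀ a : MvPolynomial (Fin 2) ℤ,
      pderiv i (a ^ p) = p • (a ^ (p - 1) * pderiv i a) := by
    intro a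
    simp [Derivation.leibniz_pow, smul_eq_mul]
  rw [hmul, map_sub, map_sub, hpow, hpow, hpow, hXadd]
  fin_cases i <;>
  · simp only [pderiv_X, Pi.single_apply, Fin.isValue, Fin.zero_eta, Fin.mk_one,
      if_true, if_false, one_ne_zero, zero_ne_one, mul_one, mul_zero, smul_zero,
      nsmul_eq_mul, reduceIte]
    push_cast
    ring

/-- In the Kähler differentials of a ring `R` of prime characteristic `p`, with
`Φ(X,Y) = ((X+Y)^p − X^p − Y^p)/p ∈ ℤ[X,Y]`, one has for all `f, g ∈ R`:
`(f+g)^(p-1) d(f+g) = f^(p-1) df + g^(p-1) dg + dΦ(f,g)` and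
`(fg)^(p-1) d(fg) = g^p · f^(p-1) df + f^p · g^(p-1) dg`. -/
theorem stmt_15 {R : Type*} [CommRing R] (p : ℕ) (hp : p.Prime) [CharP R p]
    (Φ : MvPolynomial (Fin 2) ℤ)
    (hΦ : (p : MvPolynomial (Fin 2) ℤ) * Φ = (X 0 + X 1) ^ p - X 0 ^ p - X 1 ^ p)
    (f g : R) :
    (f + g) ^ (p - 1) • (KaehlerDifferential.D ℤ R) (f + g) =
        f ^ (p - 1) • (KaehlerDifferential.D ℤ R) f +
        g ^ (p - 1) • (KaehlerDifferential.D ℤ R) g +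
        (KaehlerDifferential.D ℤ R) (aeval ![f, g] Φ) ∧
    (f * g) ^ (p - 1) • (KaehlerDifferential.D ℤ R) (f * g) =
        g ^ p • (f ^ (p - 1) • (KaehlerDifferential.D ℤ R) f) +
        f ^ p • (g ^ (p - 1) • (KaehlerDifferential.D ℤ R) g) := by
  have hp1 : p - 1 + 1 = p := Nat.succ_pred_eq_of_pos hp.pos
  set D := KaehlerDifferential.D ℤ R
  constructor
  · rw [der_aeval_fin2 D ![f, g] Φ, Fin.sum_univ_two,
      pderiv_phi p hp Φ hΦ 0, pderiv_phi p hp Φ hΦ 1]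
    simp only [map_sub, map_add, map_pow, aeval_X, Matrix.cons_val_zero, Matrix.cons_val_one,
      Matrix.head_cons, Fin.isValue]
    module
  · have h1 : (f * g) ^ (p - 1) = f ^ (p - 1) * g ^ (p - 1) := mul_pow f g (p - 1)
    have hf : f ^ p = f ^ (p - 1) * f := by rw [← pow_succ, hp1]
    have hg : g ^ p = g ^ (p - 1) * g := by rw [← pow_succ, hp1]
    rw [h1, hf, hg, D.leibniz]
    module
end

section
/- Let R be a commutative ring of characteristic p > 0. The map γ : R → Ω¹_R / dR sending f to the class of f^{p-1} df modulo exact differentials is additive and satisfies γ(fg) = g^p γ(f) + f^p γ(g); that is, γ is a derivation from R to H¹_dR(R) with its Frobenius-twisted R-module structure f ⋄ ω = f^p ω. -/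
open MvPolynomial

noncomputable abbrev SS := MvPolynomial (Fin 2) ℤ
noncomputable abbrev dS : Derivation ℤ SS (Ω[SS⁄ℤ]) := KaehlerDifferential.D ℤ SS

/-- Universal identity in `Ω[ℤ[X,Y]⁄ℤ]`: `(X+Y)^(p-1) d(X+Y) - X^(p-1) dX - Y^(p-1) dY`
is exact, namely `dΦ` where `pΦ = (X+Y)^p - X^p - Y^p`. -/
theorem univ_id (p : ℕ) (hp : p.Prime) :
    ∃ Φ : SS,
      ((X 0 + X 1 : SS) ^ (p-1)) • dS (X 0 + X 1)
        = ((X 0 : SS) ^ (p-1)) • dS (X 0) + ((X 1 : SS) ^ (p-1)) • dS (X 1) + dS Φ := by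
  haveI := Fact.mk hp
  have hdvd : (C (p:ℤ) : SS) ∣ ((X 0 + X 1)^p - X 0^p - X 1^p) := by
    rw [MvPolynomial.C_dvd_iff_dvd_coeff]
    intro i
    have h0 : MvPolynomial.map (Int.castRingHom (ZMod p))
        ((X 0 + X 1 : SS)^p - X 0^p - X 1^p) = 0 := by
      simp [add_pow_char]
    have h1 : MvPolynomial.coeff i (MvPolynomial.map (Int.castRingHom (ZMod p))
        ((X 0 + X 1 : SS)^p - X 0^p - X 1^p)) = 0 := by rw [h0, MvPolynomial.coeff_zero]
    rw [MvPolynomial.coeff_map] at h1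
    exact (ZMod.intCast_zmod_eq_zero_iff_dvd _ p).mp h1
  obtain ⟨Φ, hΦ⟩ := hdvd
  refine ⟨Φ, ?_⟩
  have key : (p : SS) • (((X 0 + X 1 : SS) ^ (p-1)) • dS (X 0 + X 1)
      - (((X 0 : SS) ^ (p-1)) • dS (X 0) + ((X 1 : SS) ^ (p-1)) • dS (X 1) + dS Φ)) = 0 := by
    have h2 := congrArg dS hΦ
    rw [map_sub, map_sub] at h2
    rw [dS.leibniz_pow, dS.leibniz_pow, dS.leibniz_pow, dS.leibniz] at h2
    have hCp : (C (p:ℤ) : SS) = (p : SS) := by simp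
    have hDp : dS (C (p:ℤ)) = 0 := dS.map_algebraMap (p : ℤ)
    rw [hDp, smul_zero, add_zero, hCp] at h2
    have hcast : ∀ ω : Ω[SS⁄ℤ], (p : ℕ) • ω = (p : SS) • ω := fun ω =>
      (Nat.cast_smul_eq_nsmul SS p ω).symm
    rw [hcast, hcast, hcast] at h2
    rw [smul_sub, smul_add, smul_add, ← h2]
    abel
  haveI hfree : Module.Free SS (Ω[SS⁄ℤ]) :=
    Module.Free.of_basis (KaehlerDifferential.mvPolynomialBasis ℤ (Fin 2))
  have hne : (p : SS) ≠ 0 := by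
    exact_mod_cast (Nat.cast_ne_zero (R := SS)).mpr hp.ne_zero
  have h3 := (smul_eq_zero.mp key).resolve_left hne
  exact sub_eq_zero.mp h3

/-- Specialization: in any commutative ring, `(f+g)^(p-1) d(f+g) - f^(p-1) df - g^(p-1) dg`
is an exact differential. -/
theorem exists_c {R : Type*} [CommRing R] (p : ℕ) (hp : p.Prime) (f g : R) :
    ∃ c : R, ((f+g)^(p-1)) • (KaehlerDifferential.D ℤ R) (f+g)
      = (f^(p-1)) • (KaehlerDifferential.D ℤ R) f
        + (g^(p-1)) • (KaehlerDifferential.D ℤ R) g + (KaehlerDifferential.D ℤ R) c := by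
  obtain ⟨Φ, hΦ⟩ := univ_id p hp
  letI : Algebra SS R := (MvPolynomial.aeval (R := ℤ) ![f, g]).toRingHom.toAlgebra
  haveI : IsScalarTower ℤ SS R := IsScalarTower.of_algebraMap_eq fun n => by
    simp [RingHom.algebraMap_toAlgebra]
  let m := KaehlerDifferential.map ℤ ℤ SS R
  have halg : ∀ q : SS, algebraMap SS R q = MvPolynomial.aeval (R := ℤ) ![f, g] q :=
    fun q => rfl
  have hs : ∀ (s : SS) (ω : Ω[SS⁄ℤ]),
      m (s • ω) = (MvPolynomial.aeval (R := ℤ) ![f, g] s) • m ω := fun s ω => by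
    rw [LinearMap.map_smul, ← halg, algebraMap_smul]
  refine ⟨MvPolynomial.aeval (R := ℤ) ![f, g] Φ, ?_⟩
  have hmD : ∀ x : SS,
      m (dS x) = KaehlerDifferential.D ℤ R (MvPolynomial.aeval (R := ℤ) ![f, g] x) :=
    fun x => KaehlerDifferential.map_D ℤ ℤ SS R x
  have h2 := congrArg m hΦ
  simp only [map_add, hs, hmD] at h2
  simpa [halg, map_add, smul_add] using h2

/-- The map `γ : R → Ω¹_R / dR`, `f ↦ [f^(p-1) df]`, is additive and satisfies
`γ(fg) = g^p γ(f) + f^p γ(g)`, i.e. it is a derivation into `H¹_dR`-type target with the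
Frobenius-twisted module structure. -/
theorem stmt_16 {R : Type*} [CommRing R] (p : ℕ) (hp : p.Prime) [CharP R p] :
    let D := KaehlerDifferential.D ℤ R
    let dR : AddSubgroup (Ω[R⁄ℤ]) := D.toLinearMap.toAddMonoidHom.range
    let γ : R → (Ω[R⁄ℤ]) ⧸ dR :=
      fun f => QuotientAddGroup.mk' dR (f ^ (p - 1) • D f)
    (∀ f g : R, γ (f + g) = γ f + γ g) ∧
    (∀ f g : R, γ (f * g) =
        QuotientAddGroup.mk' dR (g ^ p • (f ^ (p - 1) • D f)) +
        QuotientAddGroup.mk' dR (f ^ p • (g ^ (p - 1) • D g))) := by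
  intro D dR γ
  have hp1 : p - 1 + 1 = p := Nat.succ_pred_eq_of_pos hp.pos
  constructor
  · intro f g
    obtain ⟨c, hc⟩ := exists_c p hp f g
    show QuotientAddGroup.mk' dR ((f + g) ^ (p - 1) • D (f + g))
      = QuotientAddGroup.mk' dR (f ^ (p - 1) • D f)
        + QuotientAddGroup.mk' dR (g ^ (p - 1) • D g)
    rw [hc, map_add, map_add]
    have h0 : QuotientAddGroup.mk' dR (D c) = 0 :=
      (QuotientAddGroup.eq_zero_iff _).mpr ⟨c, rfl⟩
    rw [h0, add_zero]
  · intro f g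
    show QuotientAddGroup.mk' dR ((f * g) ^ (p - 1) • D (f * g))
      = QuotientAddGroup.mk' dR (g ^ p • (f ^ (p - 1) • D f))
        + QuotientAddGroup.mk' dR (f ^ p • (g ^ (p - 1) • D g))
    have key : (f * g) ^ (p - 1) • D (f * g)
        = g ^ p • (f ^ (p - 1) • D f) + f ^ p • (g ^ (p - 1) • D g) := by
      rw [D.leibniz, smul_add, smul_smul, smul_smul, smul_smul, smul_smul,
        show (f * g) ^ (p - 1) * f = f ^ p * g ^ (p - 1) by
          rw [mul_pow, show f ^ p = f ^ (p-1) * f from by rw [← pow_succ, hp1]]; ring,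
        show (f * g) ^ (p - 1) * g = g ^ p * f ^ (p - 1) by
          rw [mul_pow, show g ^ p = g ^ (p-1) * g from by rw [← pow_succ, hp1]]; ring,
        add_comm]
    rw [key, map_add]
end

section
/- Let 𝔽 be a perfect field of characteristic p > 0 and A = 𝔽[x_{ij} : 1 ≤ i,j ≤ n] the coordinate ring of n×n matrices. Let f ∈ A be the product of all leading principal minors and all trailing principal minors of the generic matrix (x_{ij}) (each minor taken once; the full determinant counted once). Then f^{p-1} ∗ σ₀ is a Frobenius splitting of A compatible with the ideal generated by the determinant, where σ₀ is the standard generator of End_φ(A). -/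
/-!
Expanding every principal minor as a determinant writes `f^(p-1)` as a signed sum of monomials
`x^{E(τ)}`, one for each family `τ` of permutations (one permutation per copy of each minor).
The generator `σ₀` kills `x^{E(τ)}` unless every exponent is `≡ -1 (mod p)`. The anti-diagonals
of the leading and trailing minors tile the `n × n` grid, so the family of reversals has
`E = (p - 1, …, p - 1)`. All `E(τ)` have the same total degree, hence an exponent that is
`≡ -1` everywhere equals this one; testing it against the weight `row · column`, which by the
rearrangement inequality is minimised on each block exactly by the reversal, forces `τ` to be
the family of reversals. So `σ₀ (f^(p-1)) = 1`. Compatibility with `(det)` holds because `det`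
is one of the minors, so `f^(p-1) · det` is divisible by `det^p`.
-/

open MvPolynomial

namespace PrincipalMinors

open Finset Equiv

section Twisted

variable {σ 𝔽 : Type*} [Field 𝔽] {p : ℕ}

noncomputable def standardTraceMonomial [Fintype σ] (p : ℕ) (m : σ →₀ ℕ) : MvPolynomial σ 𝔽 :=
  if ∀ i, p ∣ m i + 1 then
    monomial (m.mapRange (fun k => (k + 1) / p - 1)
      (Nat.sub_eq_zero_of_le (Nat.div_le_self _ _))) 1
  else 0

variable (σ₀ : MvPolynomial σ 𝔽 →+ MvPolynomial σ 𝔽)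

lemma twisted_C_mul [ExpChar 𝔽 p] [PerfectRing 𝔽 p]
    (htw : ∀ a b, σ₀ (a ^ p * b) = a * σ₀ b) (c : 𝔽) (g : MvPolynomial σ 𝔽) :
    σ₀ (C c * g) = C ((frobeniusEquiv 𝔽 p).symm c) * σ₀ g := by
  rw [← htw, ← map_pow, ← frobenius_def, frobenius_apply_frobeniusEquiv_symm]

lemma twisted_monomial_eq_zero [Fintype σ] [ExpChar 𝔽 p] [PerfectRing 𝔽 p]
    (htw : ∀ a b, σ₀ (a ^ p * b) = a * σ₀ b)
    (hval : ∀ m, σ₀ (monomial m 1) = standardTraceMonomial p m)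
    {m : σ →₀ ℕ} (hm : ¬ ∀ i, p ∣ m i + 1) (c : 𝔽) :
    σ₀ (monomial m c) = 0 := by
  rw [← mul_one c, ← C_mul_monomial, twisted_C_mul σ₀ htw, hval, standardTraceMonomial,
    if_neg hm, mul_zero]

lemma twisted_monomial_eq_one [Fintype σ] (hp : 0 < p)
    (hval : ∀ m, σ₀ (monomial m 1) = standardTraceMonomial p m)
    {m : σ →₀ ℕ} (hm : ∀ i, m i = p - 1) :
    σ₀ (monomial m 1) = 1 := by
  have hsucc : p - 1 + 1 = p := Nat.sub_add_cancel hp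
  have hzero : m.mapRange (fun k => (k + 1) / p - 1)
      (Nat.sub_eq_zero_of_le (Nat.div_le_self _ _)) = 0 := by
    ext i
    simp [hm, hsucc, Nat.div_self hp]
  rw [hval, standardTraceMonomial, if_pos fun i => by rw [hm, hsucc], hzero, monomial_zero', C_1]

lemma twisted_pow_mul_mem_span_of_dvd (hp : 0 < p) (htw : ∀ a b, σ₀ (a ^ p * b) = a * σ₀ b)
    {d f : MvPolynomial σ 𝔽} (hdf : d ∣ f) {g : MvPolynomial σ 𝔽} (hg : g ∈ Ideal.span {d}) :
    σ₀ (f ^ (p - 1) * g) ∈ Ideal.span {d} := by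
  obtain ⟨f', rfl⟩ := hdf
  obtain ⟨h, rfl⟩ := Ideal.mem_span_singleton.mp hg
  have : (d * f') ^ (p - 1) * (d * h) = d ^ p * (f' ^ (p - 1) * h) := by
    obtain ⟨q, rfl⟩ := Nat.exists_eq_add_one_of_ne_zero hp.ne'
    rw [Nat.add_sub_cancel]; ring
  rw [this, htw]
  exact Ideal.mul_mem_right _ _ (Ideal.mem_span_singleton_self d)

end Twisted

section Expansion

variable {R κ T : Type*} [CommRing R] [Fintype T] {ι : T → Type*}
  [∀ t, Fintype (ι t)]

lemma det_of_X_eq_sum {ι : Type*} [Fintype ι] [DecidableEq ι] (e : ι → κ) :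
    (Matrix.of fun i j => (X (e i, e j) : MvPolynomial (κ × κ) R)).det =
      ∑ π : Perm ι, monomial (∑ i, Finsupp.single (e (π i), e i) 1) ((Perm.sign π : ℤ) : R) := by
  rw [Matrix.det_apply]
  refine Finset.sum_congr rfl fun π _ => ?_
  simp only [Matrix.of_apply, X, ← monomial_sum_one, Units.smul_def, zsmul_eq_mul]
  rw [← map_intCast (C : R →+* MvPolynomial (κ × κ) R), C_mul_monomial, mul_one]

noncomputable def permExponent (e : ∀ t, ι t → κ) (τ : ∀ t, Perm (ι t)) : κ × κ →₀ ℕ :=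
  ∑ t, ∑ i, Finsupp.single (e t (τ t i), e t i) 1

lemma prod_det_of_X_eq_sum [DecidableEq T] [∀ t, DecidableEq (ι t)] (e : ∀ t, ι t → κ) :
    ∏ t, (Matrix.of fun i j => (X (e t i, e t j) : MvPolynomial (κ × κ) R)).det =
      ∑ τ : ∀ t, Perm (ι t),
        monomial (permExponent e τ) (∏ t, ((Perm.sign (τ t) : ℤ) : R)) := by
  classical
  simp only [det_of_X_eq_sum, Finset.prod_univ_sum, Fintype.piFinset_univ, permExponent,
    monomial_sum_prod]

lemma sum_permExponent_mul [Fintype κ] (e : ∀ t, ι t → κ) (τ : ∀ t, Perm (ι t))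
    (φ : κ × κ → ℕ) :
    ∑ x, permExponent e τ x * φ x = ∑ t, ∑ i, φ (e t (τ t i), e t i) := by
  classical
  simp only [permExponent, Finsupp.finsetSum_apply, Finset.sum_mul, Finsupp.single_apply,
    ite_mul, one_mul, zero_mul]
  rw [Finset.sum_comm]
  refine Finset.sum_congr rfl fun t _ => ?_
  rw [Finset.sum_comm]
  simp

lemma permExponent_eq_of_le [Fintype κ] (e : ∀ t, ι t → κ) {σ τ : ∀ t, Perm (ι t)}
    (h : ∀ x, permExponent e σ x ≤ permExponent e τ x) : permExponent e σ = permExponent e τ := by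
  have htotal : ∑ x, permExponent e σ x = ∑ x, permExponent e τ x := by
    simpa using (sum_permExponent_mul e σ 1).trans (sum_permExponent_mul e τ 1).symm
  ext x
  exact (Finset.sum_eq_sum_iff_of_le fun x _ => h x).mp htotal x (Finset.mem_univ x)

end Expansion

section Rearrangement

variable {L : ℕ} {g : Fin L → ℕ}

lemma sum_comp_rev_mul_le (hg : StrictMono g) (π : Perm (Fin L)) :
    ∑ i, g (Fin.rev i) * g i ≤ ∑ i, g (π i) * g i := by
  have hanti : Antivary (g ∘ Fin.rev) g :=
    (hg.monotone.comp_antitone Fin.rev_anti).antivary hg.monotone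
  simpa using hanti.sum_mul_le_sum_comp_perm_mul (σ := π.trans Fin.revPerm)

lemma eq_revPerm_of_sum_mul_eq (hg : StrictMono g) {π : Perm (Fin L)}
    (h : ∑ i, g (π i) * g i = ∑ i, g (Fin.rev i) * g i) : π = Fin.revPerm := by
  have hanti : Antivary (g ∘ Fin.rev) g :=
    (hg.monotone.comp_antitone Fin.rev_anti).antivary hg.monotone
  have hπ : Antivary (g ∘ π) g := by
    simpa [Function.comp_def] using
      (hanti.sum_comp_perm_mul_eq_sum_mul_iff (σ := π.trans Fin.revPerm)).mp (by simpa using h)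
  have hmono : StrictMono (Fin.rev ∘ π) := fun i j hij =>
    Fin.rev_lt_rev.mpr <| lt_of_le_of_ne (hg.le_iff_le.mp (hπ (hg hij)))
      fun hji => hij.ne (π.injective hji).symm
  ext i
  have := congrFun hmono.eq_id i
  rw [Function.comp_apply, Fin.rev_eq_iff] at this
  rw [Fin.revPerm_apply, this, id]

end Rearrangement

lemma eq_revPerm_of_permExponent_eq {T : Type*} [Fintype T] {L : T → ℕ} {n : ℕ}
    (e : ∀ t, Fin (L t) → Fin n) (he : ∀ t, StrictMono (e t)) {τ : ∀ t, Perm (Fin (L t))}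
    (h : permExponent e τ = permExponent e fun _ => Fin.revPerm) :
    τ = fun _ => Fin.revPerm := by
  have hg : ∀ t, StrictMono fun i => (e t i : ℕ) := fun t => Fin.val_strictMono.comp (he t)
  have hsum : ∑ t, ∑ i, (e t (τ t i) : ℕ) * e t i = ∑ t, ∑ i, (e t (Fin.rev i) : ℕ) * e t i := by
    have hτ := sum_permExponent_mul e τ fun x => (x.1 : ℕ) * x.2
    have hrev := sum_permExponent_mul e (fun _ => Fin.revPerm) fun x => (x.1 : ℕ) * x.2
    rw [h] at hτ
    simpa using hτ.symm.trans hrev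
  have hle : ∀ t ∈ univ, ∑ i, (e t (Fin.rev i) : ℕ) * e t i ≤ ∑ i, (e t (τ t i) : ℕ) * e t i :=
    fun t _ => sum_comp_rev_mul_le (hg t) (τ t)
  funext t
  exact eq_revPerm_of_sum_mul_eq (hg t)
    ((Finset.sum_eq_sum_iff_of_le hle).mp hsum.symm t (mem_univ t)).symm

/-- `Block n` indexes the principal minors of `f`: `inl k` is the leading and `inr k` the
trailing one of size `k + 1`. -/
abbrev Block (n : ℕ) := Fin n ⊕ Fin (n - 1)

namespace Block

variable {n : ℕ}

def start : Block n → ℕ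
  | .inl _ => 0
  | .inr k => n - (k + 1)

def size : Block n → ℕ
  | .inl k => k + 1
  | .inr k => k + 1

lemma start_add_size_le : ∀ s : Block n, s.start + s.size ≤ n
  | .inl k => by have := k.isLt; simp only [start, size]; omega
  | .inr k => by have := k.isLt; simp only [start, size]; omega

def emb (s : Block n) (i : Fin s.size) : Fin n :=
  ⟨s.start + i, by have := s.start_add_size_le; omega⟩

lemma emb_strictMono (s : Block n) : StrictMono s.emb :=
  fun _ _ h => Nat.add_lt_add_left h _

lemma two_mul_start_add_size_injective :
    Function.Injective fun s : Block n => 2 * s.start + s.size := by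
  rintro (a | a) (b | b) h <;> have := a.isLt <;> have := b.isLt <;>
    simp only [start, size] at h <;> first | (exfalso; omega) | (congr 1; ext; omega)

def antidiag (x : Σ s : Block n, Fin s.size) : Fin n × Fin n :=
  (x.1.emb (Fin.rev x.2), x.1.emb x.2)

lemma antidiag_bijective : Function.Bijective (antidiag (n := n)) := by
  constructor
  · rintro ⟨s, i⟩ ⟨s', i'⟩ h
    simp only [antidiag, Prod.mk.injEq, Fin.ext_iff, emb, Fin.val_rev] at h
    have hs : s = s' := two_mul_start_add_size_injective <| by
      have := i.isLt; have := i'.isLt; dsimp only; omega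
    subst hs
    have hi : i = i' := Fin.ext (by omega)
    rw [hi]
  · rintro ⟨u, v⟩
    have := u.isLt; have := v.isLt
    by_cases huv : u + v < n
    · refine ⟨⟨.inl ⟨u + v, huv⟩, ⟨v, by simp only [size]; omega⟩⟩, ?_⟩
      ext <;> simp [antidiag, emb, start, size]
    · refine ⟨⟨.inr ⟨2 * n - 2 - (u + v), by omega⟩, ⟨n - 1 - u, by simp only [size]; omega⟩⟩, ?_⟩
      ext <;> simp [antidiag, emb, start, size] <;> omega

lemma permExponent_revPerm_apply (q : ℕ) (x : Fin n × Fin n) :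
    permExponent (fun t : Block n × Fin q => t.1.emb) (fun _ => Fin.revPerm) x = q := by
  classical
  have h := sum_permExponent_mul (fun t : Block n × Fin q => t.1.emb) (fun _ => Fin.revPerm)
    fun y => if y = x then 1 else 0
  simp only [mul_ite, mul_one, mul_zero, sum_ite_eq', mem_univ, if_true] at h
  have hfiber : ∑ s : Block n, ∑ i : Fin s.size, (if antidiag ⟨s, i⟩ = x then 1 else 0) = 1 := by
    rw [← Fintype.sum_sigma fun y => if antidiag y = x then 1 else 0,
      antidiag_bijective.sum_comp fun y => if y = x then 1 else 0]
    simp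
  rw [h, Fintype.sum_prod_type, Finset.sum_comm]
  change ∑ _c : Fin q, ∑ s : Block n, ∑ i : Fin s.size, (if antidiag ⟨s, i⟩ = x then 1 else 0) = q
  simp only [hfiber, sum_const, card_univ, Fintype.card_fin, smul_eq_mul, mul_one]

variable (𝔽 : Type*) [Field 𝔽]

noncomputable def minor (s : Block n) : MvPolynomial (Fin n × Fin n) 𝔽 :=
  (Matrix.of fun i j => X (s.emb i, s.emb j)).det

lemma minor_inl (k : Fin n) :
    minor 𝔽 (.inl k) = (Matrix.of fun i j : Fin (k + 1) =>
      X (Fin.castLE k.isLt i, Fin.castLE k.isLt j)).det := by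
  have hemb : ∀ i, emb (.inl k) i = Fin.castLE k.isLt i := fun i => Fin.ext (zero_add _)
  simp only [minor, hemb]
  rfl

lemma det_dvd_prod_minor :
    (Matrix.of fun i j : Fin n => (X (i, j) : MvPolynomial (Fin n × Fin n) 𝔽)).det ∣
      ∏ s : Block n, minor 𝔽 s := by
  cases n with
  | zero => simp
  | succ m =>
    rw [show (Matrix.of fun i j : Fin (m + 1) => (X (i, j) : MvPolynomial _ 𝔽)).det =
      minor 𝔽 (.inl (Fin.last m)) by rw [minor_inl]; rfl]
    exact dvd_prod_of_mem _ (mem_univ _)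

end Block

lemma intCast_units_pow_sub_one {𝔽 : Type*} [Field 𝔽] (p : ℕ) [ExpChar 𝔽 p] (u : ℤˣ) :
    ((u : ℤ) : 𝔽) ^ (p - 1) = 1 := by
  have hfrob : ((u : ℤ) : 𝔽) ^ p = u := map_intCast (frobenius 𝔽 p) u
  have hne : ((u : ℤ) : 𝔽) ≠ 0 := by rcases Int.units_eq_one_or u with rfl | rfl <;> simp
  rwa [← pow_sub_one_mul (expChar_pos 𝔽 p).ne', mul_eq_right₀ hne] at hfrob

lemma twisted_prod_minor_pow {𝔽 : Type*} [Field 𝔽] {p : ℕ} [ExpChar 𝔽 p] [PerfectRing 𝔽 p]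
    {n : ℕ} (σ₀ : MvPolynomial (Fin n × Fin n) 𝔽 →+ MvPolynomial (Fin n × Fin n) 𝔽)
    (htw : ∀ a b, σ₀ (a ^ p * b) = a * σ₀ b)
    (hval : ∀ m, σ₀ (monomial m 1) = standardTraceMonomial p m) :
    σ₀ ((∏ s : Block n, Block.minor 𝔽 s) ^ (p - 1)) = 1 := by
  let e : ∀ t : Block n × Fin (p - 1), Fin t.1.size → Fin n := fun t => t.1.emb
  have hexp : (∏ s : Block n, Block.minor 𝔽 s) ^ (p - 1) =
      ∑ τ : ∀ t : Block n × Fin (p - 1), Perm (Fin t.1.size),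
        monomial (permExponent e τ) (∏ t, ((Perm.sign (τ t) : ℤ) : 𝔽)) := by
    rw [← prod_det_of_X_eq_sum, Fintype.prod_prod_type, ← Finset.prod_pow]
    refine Finset.prod_congr rfl fun s _ => ?_
    change _ = ∏ _c : Fin (p - 1), Block.minor 𝔽 s
    rw [prod_const, card_univ, Fintype.card_fin]
  have hrev (x : Fin n × Fin n) : permExponent e (fun _ => Fin.revPerm) x = p - 1 :=
    Block.permExponent_revPerm_apply (p - 1) x
  rw [hexp, map_sum, Finset.sum_eq_single (fun _ => Fin.revPerm)]
  · rw [Fintype.prod_prod_type, Finset.prod_eq_one fun s _ => by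
      change ∏ _c : Fin (p - 1), ((Perm.sign (Fin.revPerm : Perm (Fin s.size)) : ℤ) : 𝔽) = 1
      rw [prod_const, card_univ, Fintype.card_fin, intCast_units_pow_sub_one]]
    exact twisted_monomial_eq_one σ₀ (expChar_pos 𝔽 p) hval hrev
  · intro τ _ hτ
    refine twisted_monomial_eq_zero σ₀ htw hval (fun hdvd => hτ ?_) _
    refine eq_revPerm_of_permExponent_eq e (fun t => t.1.emb_strictMono) ?_
    refine (permExponent_eq_of_le e fun x => ?_).symm
    have := Nat.le_of_dvd (Nat.succ_pos _) (hdvd x)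
    rw [hrev]
    omega
  · simp

end PrincipalMinors

/-- Splitting of the space of `n × n` matrices compatible with the determinant divisor:
in `A = 𝔽[x_{ij}]`, let `f` be the product of all leading principal minors (sizes
`1, …, n`) and all trailing principal minors (sizes `1, …, n-1`) of the generic matrix.
Then `f^(p-1) ∗ σ₀ : g ↦ σ₀ (f^(p-1) * g)` is a Frobenius splitting of `A` compatible
with the ideal generated by the determinant. -/
theorem stmt_18 {𝔽 : Type*} [Field 𝔽] (p : ℕ) (hp : p.Prime)
    [ExpChar 𝔽 p] [PerfectRing 𝔽 p] (n : ℕ)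
    (σ₀ : MvPolynomial (Fin n × Fin n) 𝔽 → MvPolynomial (Fin n × Fin n) 𝔽)
    (h0add : ∀ a b, σ₀ (a + b) = σ₀ a + σ₀ b)
    (h0tw : ∀ a b, σ₀ (a ^ p * b) = a * σ₀ b)
    (h0val : ∀ m : Fin n × Fin n →₀ ℕ,
      σ₀ (monomial m 1) =
        if ∀ ij, p ∣ m ij + 1 then
          monomial (m.mapRange (fun k => (k + 1) / p - 1)
            (by simp [Nat.div_eq_of_lt hp.one_lt])) 1
        else 0) :
    let lead : ∀ k : Fin n, MvPolynomial (Fin n × Fin n) 𝔽 := fun k =>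
      Matrix.det (Matrix.of fun i j : Fin ((k : ℕ) + 1) =>
        X (Fin.castLE k.isLt i, Fin.castLE k.isLt j))
    let trail : ∀ k : Fin (n - 1), MvPolynomial (Fin n × Fin n) 𝔽 := fun k =>
      Matrix.det (Matrix.of fun i j : Fin ((k : ℕ) + 1) =>
        X (⟨n - ((k : ℕ) + 1) + (i : ℕ), by have := i.isLt; have := k.isLt; omega⟩,
           ⟨n - ((k : ℕ) + 1) + (j : ℕ), by have := j.isLt; have := k.isLt; omega⟩))
    let f : MvPolynomial (Fin n × Fin n) 𝔽 := (∏ k, lead k) * ∏ k, trail k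
    let det : MvPolynomial (Fin n × Fin n) 𝔽 :=
      Matrix.det (Matrix.of fun i j : Fin n => X (i, j))
    let σ : MvPolynomial (Fin n × Fin n) 𝔽 → MvPolynomial (Fin n × Fin n) 𝔽 :=
      fun g => σ₀ (f ^ (p - 1) * g)
    (∀ a b, σ (a + b) = σ a + σ b) ∧
    (∀ a b, σ (a ^ p * b) = a * σ b) ∧
    σ 1 = 1 ∧
    (∀ g ∈ Ideal.span {det}, σ g ∈ Ideal.span {det}) := by
  intro lead trail f det σ
  have hf : f = ∏ s : PrincipalMinors.Block n, PrincipalMinors.Block.minor 𝔽 s := by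
    rw [Fintype.prod_sum_type]
    exact congrArg (· * _)
      (Finset.prod_congr rfl fun k _ => (PrincipalMinors.Block.minor_inl 𝔽 k).symm)
  let σ₀' := AddMonoidHom.mk' σ₀ h0add
  refine ⟨fun a b => by simp only [σ, mul_add, h0add], fun a b => ?_, ?_, fun g hg => ?_⟩
  · simp only [σ, mul_left_comm _ (a ^ p), h0tw]
  · simp only [σ, mul_one, hf]
    exact PrincipalMinors.twisted_prod_minor_pow σ₀' h0tw h0val
  · exact PrincipalMinors.twisted_pow_mul_mem_span_of_dvd σ₀' hp.pos h0tw
      (hf ▸ PrincipalMinors.Block.det_dvd_prod_minor 𝔽) hg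
end
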